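/- Let ℓ₁,…,ℓₙ be positive integers, ℓ = max_k ℓ_k, γ_k = ℓ/ℓ_k, ‖γ‖ = Σ_{k=1}^n γ_k, and ρ(x) = (Σ_{k=1}^n x_k^{2ℓ_k})^{1/(2ℓ)} for x ∈ ℝⁿ. Then for every real s: the integral ∫_{{x : ρ(x) ≤ 1}} ρ(x)^s dx is finite if and only if s > -‖γ‖; and in that case, for every t > 0, ∫_{{x : ρ(x) ≤ t}} ρ(x)^s dx = t^{s+‖γ‖} ∫_{{x : ρ(x) ≤ 1}} ρ(x)^s dx. -/

import Mathlib

open MeasureTheory Real Set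
open scoped ENNReal

set_option linter.unusedVariables false

noncomputable section

namespace Semielliptic

/-- `σ(x) = Σ_k x_k^{2ℓ_k}` -/
def sig {n : ℕ} (l : Fin n → ℕ) (x : Fin n → ℝ) : ℝ := ∑ k, x k ^ (2 * l k)

/-- `ℓ = max_k ℓ_k` -/
def lmax {n : ℕ} (l : Fin n → ℕ) : ℕ := Finset.univ.sup l

/-- the anisotropic length `ρ(x) = σ(x)^{1/(2ℓ)}` -/
def rho {n : ℕ} (l : Fin n → ℕ) (x : Fin n → ℝ) : ℝ :=
  sig l x ^ ((1 : ℝ) / (2 * (lmax l : ℝ)))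

/-- `γ_k = ℓ/ℓ_k` -/
def gam {n : ℕ} (l : Fin n → ℕ) (k : Fin n) : ℝ := (lmax l : ℝ) / (l k : ℝ)

/-- `‖γ‖ = Σ_k γ_k` -/
def gnorm {n : ℕ} (l : Fin n → ℕ) : ℝ := ∑ k, gam l k

/-- `α·γ = Σ_k α_k γ_k` -/
def dotg {n : ℕ} (l : Fin n → ℕ) (a : Fin n → ℕ) : ℝ := ∑ k, (a k : ℝ) * gam l k

/-- the partial derivative in the k-th coordinate direction -/
def pd {n : ℕ} {E : Type*} [NormedAddCommGroup E] [NormedSpace ℝ E] (k : Fin n)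
    (f : (Fin n → ℝ) → E) : (Fin n → ℝ) → E :=
  fun x => fderiv ℝ f x (Pi.single k 1)

/-- the multi-index partial derivative `∂^α` -/
def pdM {n : ℕ} {E : Type*} [NormedAddCommGroup E] [NormedSpace ℝ E] (a : Fin n → ℕ)
    (f : (Fin n → ℝ) → E) : (Fin n → ℝ) → E :=
  Fin.foldr n (fun k g => (pd k)^[a k] g) f

/-- the symbol `L(x) = Σ_{α·γ=ℓ} A_α (ix)^α` -/
def symb {n m : ℕ} {ι : Type} [Fintype ι] (l : Fin n → ℕ)
    (A : ι → Matrix (Fin m) (Fin m) ℂ) (mi : ι → Fin n → ℕ)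
    (x : Fin n → ℝ) : Matrix (Fin m) (Fin m) ℂ :=
  ∑ i, (∏ k, (Complex.I * (x k : ℂ)) ^ (mi i k)) • A i

/-- the Frobenius (Hilbert–Schmidt) norm of a matrix -/
def fro {m : ℕ} (M : Matrix (Fin m) (Fin m) ℂ) : ℝ :=
  Real.sqrt (∑ i, ∑ j, ‖M i j‖ ^ 2)

/-- the integrand `e^{ix·z}(iz)^β σ(z) e^{-tσ(z)} L(z)⁻¹` -/
def jker {n m : ℕ} {ι : Type} [Fintype ι] (l : Fin n → ℕ)
    (A : ι → Matrix (Fin m) (Fin m) ℂ) (mi : ι → Fin n → ℕ)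
    (b : Fin n → ℕ) (x : Fin n → ℝ) (t : ℝ) (z : Fin n → ℝ) : Matrix (Fin m) (Fin m) ℂ :=
  (Complex.exp (Complex.I * ((∑ k, x k * z k : ℝ) : ℂ)) *
      (∏ k, (Complex.I * (z k : ℂ)) ^ (b k)) *
      ((sig l z : ℝ) : ℂ) * ((Real.exp (-(t * sig l z)) : ℝ) : ℂ)) • (symb l A mi z)⁻¹

/-- `J_β(x,t) = ∫_{ℝⁿ} e^{ix·z}(iz)^β σ(z) e^{-tσ(z)} L(z)⁻¹ dz`, computed entrywise -/
def Jmat {n m : ℕ} {ι : Type} [Fintype ι] (l : Fin n → ℕ)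
    (A : ι → Matrix (Fin m) (Fin m) ℂ) (mi : ι → Fin n → ℕ)
    (b : Fin n → ℕ) (x : Fin n → ℝ) (t : ℝ) : Matrix (Fin m) (Fin m) ℂ :=
  Matrix.of fun i j => ∫ z : Fin n → ℝ, jker l A mi b x t z i j

/-- `F_β(x) = (2π)^{-n} ∫_0^∞ J_β(x,t) dt`, computed entrywise -/
def Fmat {n m : ℕ} {ι : Type} [Fintype ι] (l : Fin n → ℕ)
    (A : ι → Matrix (Fin m) (Fin m) ℂ) (mi : ι → Fin n → ℕ)
    (b : Fin n → ℕ) (x : Fin n → ℝ) : Matrix (Fin m) (Fin m) ℂ :=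
  Matrix.of fun i j =>
    ((((2 * Real.pi) ^ n)⁻¹ : ℝ) : ℂ) * ∫ t in Ioi (0 : ℝ), Jmat l A mi b x t i j

/-- `v` is the weak derivative `∂^α u`: tested against scalar test functions. -/
def IsWeakDeriv {n m : ℕ} (a : Fin n → ℕ) (u v : (Fin n → ℝ) → Fin m → ℂ) : Prop :=
  ∀ φ : (Fin n → ℝ) → ℝ, ContDiff ℝ (⊤ : ℕ∞) φ → HasCompactSupport φ →
    ∫ x : Fin n → ℝ, pdM a φ x • u x
      = ((-1 : ℝ) ^ (∑ k, a k)) • ∫ x : Fin n → ℝ, φ x • v x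

open Classical in
/-- the (finite) set of multi-indices with `α·γ ≤ r` -/
def idxSet {n : ℕ} (l : Fin n → ℕ) (r : ℝ) : Finset (Fin n → ℕ) :=
  (Finset.image (fun f : Fin n → Fin (⌈r⌉₊ + 1) => fun k => (f k : ℕ)) Finset.univ).filter
    (fun a => dotg l a ≤ r)

/-- `𝓛u = Σ_{α·γ=ℓ} A_α ∂^α u`, computed from the given family of (weak) derivatives of `u` -/
def Lop {n m : ℕ} {ι : Type} [Fintype ι] (A : ι → Matrix (Fin m) (Fin m) ℂ)
    (mi : ι → Fin n → ℕ) (du : (Fin n → ℕ) → (Fin n → ℝ) → Fin m → ℂ)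
    (x : Fin n → ℝ) : Fin m → ℂ :=
  ∑ i, (A i).mulVec (du (mi i) x)

/-- `𝓛φ` for smooth `φ` (classical derivatives) -/
def LopC {n m : ℕ} {ι : Type} [Fintype ι] (A : ι → Matrix (Fin m) (Fin m) ℂ)
    (mi : ι → Fin n → ℕ) (φ : (Fin n → ℝ) → Fin m → ℂ) (x : Fin n → ℝ) : Fin m → ℂ :=
  ∑ i, (A i).mulVec (pdM (mi i) φ x)

/-- the formal adjoint `𝓛*φ = Σ (-1)^{|α|} A_α* ∂^α φ` on smooth functions -/
def LopAdj {n m : ℕ} {ι : Type} [Fintype ι] (A : ι → Matrix (Fin m) (Fin m) ℂ)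
    (mi : ι → Fin n → ℕ) (φ : (Fin n → ℝ) → Fin m → ℂ) (x : Fin n → ℝ) : Fin m → ℂ :=
  ∑ i, ((-1 : ℂ) ^ (∑ k, mi i k)) • (A i).conjTranspose.mulVec (pdM (mi i) φ x)

/-- the pairing `u·v = v* u` in `ℂ^m` -/
def pairc {m : ℕ} (u v : Fin m → ℂ) : ℂ := ∑ j, u j * (starRingEnd ℂ) (v j)

end Semielliptic

/-! The anisotropic dilations `δ_t x = (t^{γ_k} x_k)_k` satisfy `ρ(δ_t x) = t ρ(x)` and
`det δ_t = t^{‖γ‖}`, so `|{ρ ≤ r}| = r^{‖γ‖} |{ρ ≤ 1}|`. Any nonnegative `f` with sublevel sets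
of measure `c r^g` is, on `{f ≤ t}`, distributed like `u ↦ u^{1/g}` under `c` times Lebesgue
measure on `(0, t^g]`. So `∫_{ρ ≤ t} ρ^s = |{ρ ≤ 1}| ∫_0^{t^{‖γ‖}} u^{s/‖γ‖} du`, which is finite
iff `s > -‖γ‖` and then equals `|{ρ ≤ 1}| ‖γ‖ t^{s+‖γ‖} / (s + ‖γ‖)`. -/

namespace MeasureTheory

variable {α : Type*} [MeasurableSpace α] {μ : Measure α} {f : α → ℝ} {g : ℝ} {c : ℝ≥0∞}

theorem map_restrict_setOf_le_eq_smul_map_rpow_inv (hf : Measurable f) (hf0 : ∀ x, 0 ≤ f x)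
    (hg : 0 < g) (hc : c ≠ ∞)
    (hμ : ∀ r, 0 ≤ r → μ {x | f x ≤ r} = ENNReal.ofReal (r ^ g) * c) {t : ℝ} (ht : 0 ≤ t) :
    (μ.restrict {x | f x ≤ t}).map f
      = c • (volume.restrict (Ioc 0 (t ^ g))).map (fun u => u ^ g⁻¹) := by
  have hmeas : Measurable fun u : ℝ => u ^ g⁻¹ := by fun_prop
  have : IsFiniteMeasure (μ.restrict {x | f x ≤ t}) :=
    isFiniteMeasure_restrict.mpr <| by
      rw [hμ t ht]; exact ENNReal.mul_ne_top ENNReal.ofReal_ne_top hc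
  refine Measure.ext_of_Iic _ _ fun a => ?_
  rw [Measure.map_apply hf measurableSet_Iic, Measure.restrict_apply (hf measurableSet_Iic),
    Measure.smul_apply, Measure.map_apply hmeas measurableSet_Iic,
    Measure.restrict_apply (hmeas measurableSet_Iic), smul_eq_mul]
  rcases lt_or_ge a 0 with ha | ha
  · have h1 : f ⁻¹' Iic a ∩ {x | f x ≤ t} = ∅ :=
      eq_empty_of_forall_notMem fun x hx => (hf0 x).not_gt (hx.1.trans_lt ha)
    have h2 : (fun u : ℝ => u ^ g⁻¹) ⁻¹' Iic a ∩ Ioc 0 (t ^ g) = ∅ :=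
      eq_empty_of_forall_notMem fun u hu =>
        (rpow_nonneg hu.2.1.le _).not_gt (hu.1.trans_lt ha)
    rw [h1, h2, measure_empty, measure_empty, mul_zero]
  · have h1 : f ⁻¹' Iic a ∩ {x | f x ≤ t} = {x | f x ≤ min a t} := by
      ext x; simp
    have h2 : (fun u : ℝ => u ^ g⁻¹) ⁻¹' Iic a ∩ Ioc 0 (t ^ g) = Ioc 0 (min a t ^ g) := by
      ext u
      simp only [mem_inter_iff, mem_preimage, mem_Iic, mem_Ioc]
      rw [and_left_comm]
      refine and_congr_right fun hu => ?_
      rw [← rpow_inv_le_iff_of_pos hu.le ht hg,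
        ← rpow_inv_le_iff_of_pos hu.le (le_min ha ht) hg, le_min_iff]
    rw [h1, h2, hμ _ (le_min ha ht), Real.volume_Ioc, sub_zero, mul_comm]

theorem integrableOn_rpow_comp_iff (hf : Measurable f) (hf0 : ∀ x, 0 ≤ f x) (hg : 0 < g)
    (hc₀ : c ≠ 0) (hc : c ≠ ∞) (hμ : ∀ r, 0 ≤ r → μ {x | f x ≤ r} = ENNReal.ofReal (r ^ g) * c)
    {t : ℝ} (ht : 0 < t) (s : ℝ) :
    IntegrableOn (fun x => f x ^ s) {x | f x ≤ t} μ ↔ -g < s := by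
  have hpow : Measurable fun y : ℝ => y ^ s := by fun_prop
  have hmeas : Measurable fun u : ℝ => u ^ g⁻¹ := by fun_prop
  have hcongr : EqOn ((fun y : ℝ => y ^ s) ∘ fun u => u ^ g⁻¹) (fun u => u ^ (g⁻¹ * s))
      (Ioc 0 (t ^ g)) := fun u hu => (rpow_mul hu.1.le _ _).symm
  rw [IntegrableOn, ← Function.comp_def (fun y : ℝ => y ^ s),
    ← integrable_map_measure hpow.aestronglyMeasurable hf.aemeasurable,
    map_restrict_setOf_le_eq_smul_map_rpow_inv hf hf0 hg hc hμ ht.le,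
    integrable_smul_measure hc₀ hc,
    integrable_map_measure hpow.aestronglyMeasurable hmeas.aemeasurable, ← IntegrableOn,
    integrableOn_congr_fun hcongr measurableSet_Ioc, integrableOn_Ioc_iff_integrableOn_Ioo,
    intervalIntegral.integrableOn_Ioo_rpow_iff (rpow_pos_of_pos ht g), lt_inv_mul_iff₀ hg,
    mul_neg_one]

theorem setIntegral_rpow_comp (hf : Measurable f) (hf0 : ∀ x, 0 ≤ f x) (hg : 0 < g)
    (hc : c ≠ ∞) (hμ : ∀ r, 0 ≤ r → μ {x | f x ≤ r} = ENNReal.ofReal (r ^ g) * c)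
    {t : ℝ} (ht : 0 ≤ t) {s : ℝ} (hs : -g < s) :
    ∫ x in {x | f x ≤ t}, f x ^ s ∂μ = c.toReal * g / (s + g) * t ^ (s + g) := by
  have hpow : Measurable fun y : ℝ => y ^ s := by fun_prop
  have hmeas : Measurable fun u : ℝ => u ^ g⁻¹ := by fun_prop
  have hexp : -1 < g⁻¹ * s := by rwa [lt_inv_mul_iff₀ hg, mul_neg_one]
  calc ∫ x in {x | f x ≤ t}, f x ^ s ∂μ
      = ∫ y, y ^ s ∂(μ.restrict {x | f x ≤ t}).map f :=
        (integral_map hf.aemeasurable hpow.aestronglyMeasurable).symm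
    _ = c.toReal * ∫ u in Ioc 0 (t ^ g), (u ^ g⁻¹) ^ s := by
        rw [map_restrict_setOf_le_eq_smul_map_rpow_inv hf hf0 hg hc hμ ht, integral_smul_measure,
          integral_map hmeas.aemeasurable hpow.aestronglyMeasurable, smul_eq_mul]
    _ = c.toReal * ∫ u in (0)..t ^ g, u ^ (g⁻¹ * s) := by
        rw [intervalIntegral.integral_of_le (by positivity)]
        congr 1
        exact setIntegral_congr_fun measurableSet_Ioc fun u hu => (rpow_mul hu.1.le _ _).symm
    _ = c.toReal * g / (s + g) * t ^ (s + g) := by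
        have hsg : g * (g⁻¹ * s + 1) = s + g := by field_simp
        rw [integral_rpow (Or.inl hexp), zero_rpow (by linarith), sub_zero, ← rpow_mul ht, hsg]
        field_simp

end MeasureTheory

namespace Semielliptic

variable {n : ℕ} {l : Fin n → ℕ}

lemma sig_nonneg (l : Fin n → ℕ) (x : Fin n → ℝ) : 0 ≤ sig l x :=
  Finset.sum_nonneg fun k _ => (even_two_mul (l k)).pow_nonneg _

lemma rho_nonneg (l : Fin n → ℕ) (x : Fin n → ℝ) : 0 ≤ rho l x :=
  rpow_nonneg (sig_nonneg l x) _

lemma continuous_sig (l : Fin n → ℕ) : Continuous (sig l) := by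
  unfold sig; fun_prop

lemma continuous_rho (l : Fin n → ℕ) : Continuous (rho l) :=
  (continuous_sig l).rpow_const fun _ => Or.inr (by positivity)

lemma le_lmax (l : Fin n → ℕ) (k : Fin n) : l k ≤ lmax l :=
  Finset.le_sup (Finset.mem_univ k)

lemma lmax_pos (hn : 0 < n) (hl : ∀ k, 0 < l k) : 0 < lmax l :=
  (hl ⟨0, hn⟩).trans_le (le_lmax l _)

lemma gnorm_pos (hn : 0 < n) (hl : ∀ k, 0 < l k) : 0 < gnorm l :=
  Finset.sum_pos (fun k _ => div_pos (by exact_mod_cast (hl k).trans_le (le_lmax l k))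
    (by exact_mod_cast hl k)) ⟨⟨0, hn⟩, Finset.mem_univ _⟩

lemma eq_zero_of_rho_eq_zero (hn : 0 < n) (hl : ∀ k, 0 < l k) {x : Fin n → ℝ}
    (hx : rho l x = 0) : x = 0 := by
  have hσ : sig l x = 0 := ((rpow_eq_zero_iff_of_nonneg (sig_nonneg l x)).mp hx).1
  funext k
  have hk := (Finset.sum_eq_zero_iff_of_nonneg
    (fun i _ => (even_two_mul (l i)).pow_nonneg (x i))).mp hσ k (Finset.mem_univ k)
  exact (pow_eq_zero_iff (Nat.mul_ne_zero two_ne_zero (hl k).ne')).mp hk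

def dilation (l : Fin n → ℕ) (t : ℝ) : (Fin n → ℝ) →ₗ[ℝ] (Fin n → ℝ) :=
  Matrix.toLin' (Matrix.diagonal fun k => t ^ gam l k)

lemma det_dilation {t : ℝ} (ht : 0 < t) : LinearMap.det (dilation l t) = t ^ gnorm l := by
  rw [dilation, LinearMap.det_toLin', Matrix.det_diagonal, gnorm, rpow_sum_of_pos ht]

lemma rho_dilation (hn : 0 < n) (hl : ∀ k, 0 < l k) {t : ℝ} (ht : 0 < t) (x : Fin n → ℝ) :
    rho l (dilation l t x) = t * rho l x := by
  have hL : (0 : ℝ) < 2 * lmax l := by have := lmax_pos hn hl; positivity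
  have hsig : sig l (dilation l t x) = t ^ (2 * (lmax l : ℝ)) * sig l x := by
    simp only [sig, dilation, Matrix.toLin'_apply, Matrix.mulVec_diagonal, Finset.mul_sum]
    refine Finset.sum_congr rfl fun k _ => ?_
    have hk : (l k : ℝ) ≠ 0 := by exact_mod_cast (hl k).ne'
    rw [mul_pow, ← rpow_natCast (t ^ gam l k), ← rpow_mul ht.le, gam]
    congr 2
    push_cast
    field_simp
  rw [rho, rho, hsig, mul_rpow (by positivity) (sig_nonneg l x), ← rpow_mul ht.le,
    mul_one_div_cancel hL.ne', rpow_one]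

lemma volume_setOf_rho_le (hn : 0 < n) (hl : ∀ k, 0 < l k) {t : ℝ} (ht : 0 ≤ t) :
    volume {x | rho l x ≤ t} = ENNReal.ofReal (t ^ gnorm l) * volume {x | rho l x ≤ 1} := by
  rcases ht.eq_or_lt with rfl | ht
  · have : Nonempty (Fin n) := ⟨⟨0, hn⟩⟩
    have hsub : {x | rho l x ≤ 0} ⊆ {0} := fun x hx =>
      eq_zero_of_rho_eq_zero hn hl (le_antisymm hx (rho_nonneg l x))
    rw [measure_mono_null hsub (measure_singleton 0), zero_rpow (gnorm_pos hn hl).ne',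
      ENNReal.ofReal_zero, zero_mul]
  · have hpre : dilation l t⁻¹ ⁻¹' {x | rho l x ≤ 1} = {x | rho l x ≤ t} := by
      ext x
      rw [mem_preimage, mem_ofPred_eq, mem_ofPred_eq, rho_dilation hn hl (inv_pos.mpr ht),
        inv_mul_le_iff₀ ht, mul_one]
    have hdet : LinearMap.det (dilation l t⁻¹) = (t ^ gnorm l)⁻¹ := by
      rw [det_dilation (inv_pos.mpr ht), inv_rpow ht.le]
    rw [← hpre, Measure.addHaar_preimage_linearMap _ (by rw [hdet]; positivity), hdet, inv_inv,
      abs_of_pos (by positivity)]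

lemma volume_setOf_rho_le_one_lt_top (hn : 0 < n) (hl : ∀ k, 0 < l k) :
    volume {x : Fin n → ℝ | rho l x ≤ 1} < ∞ := by
  have he : 0 < (1 : ℝ) / (2 * lmax l) := by have := lmax_pos hn hl; positivity
  have hsub : {x : Fin n → ℝ | rho l x ≤ 1} ⊆ univ.pi fun _ => Icc (-1) 1 := by
    intro x hx k _
    have hσ : sig l x ≤ 1 := by
      simpa only [one_rpow] using (rpow_le_rpow_iff (sig_nonneg l x) zero_le_one he).mp
        (hx.trans_eq (one_rpow _).symm)
    have hk : x k ^ (2 * l k) ≤ 1 :=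
      (Finset.single_le_sum (f := fun i => x i ^ (2 * l i))
        (fun i _ => (even_two_mul (l i)).pow_nonneg _) (Finset.mem_univ k)).trans hσ
    rw [← (even_two_mul (l k)).pow_abs,
      pow_le_one_iff_of_nonneg (abs_nonneg _) (Nat.mul_ne_zero two_ne_zero (hl k).ne')] at hk
    exact abs_le.mp hk
  exact (measure_mono hsub).trans_lt (isCompact_univ_pi fun _ => isCompact_Icc).measure_lt_top

lemma volume_setOf_rho_le_one_pos (hn : 0 < n) (hl : ∀ k, 0 < l k) :
    0 < volume {x : Fin n → ℝ | rho l x ≤ 1} := by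
  have h0 : rho l 0 = 0 := by
    have hσ : sig l 0 = 0 :=
      Finset.sum_eq_zero fun k _ => zero_pow (Nat.mul_ne_zero two_ne_zero (hl k).ne')
    rw [rho, hσ, zero_rpow (by have := lmax_pos hn hl; positivity)]
  have hU : IsOpen {x : Fin n → ℝ | rho l x < 1} := isOpen_lt (continuous_rho l) continuous_const
  exact (hU.measure_pos volume ⟨0, by simp [h0]⟩).trans_le
    (measure_mono fun x (hx : rho l x < 1) => hx.le)

/-- Lemma 2.1(b): `∫_{ρ≤1} ρ^s dx` is finite iff `s > -‖γ‖`, and then the scaling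
identity `∫_{ρ≤t} ρ^s = t^{s+‖γ‖} ∫_{ρ≤1} ρ^s` holds for all `t > 0`. -/
theorem stmt1 (n : ℕ) (hn : 0 < n) (l : Fin n → ℕ) (hl : ∀ k, 0 < l k) (s : ℝ) :
    (IntegrableOn (fun x : Fin n → ℝ => rho l x ^ s) {x | rho l x ≤ 1} volume
      ↔ -gnorm l < s)
    ∧ (-gnorm l < s → ∀ t : ℝ, 0 < t →
        ∫ x in {x : Fin n → ℝ | rho l x ≤ t}, rho l x ^ s
          = t ^ (s + gnorm l) * ∫ x in {x : Fin n → ℝ | rho l x ≤ 1}, rho l x ^ s) := by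
  have hρ := (continuous_rho l).measurable
  have hg := gnorm_pos hn hl
  have hc := (volume_setOf_rho_le_one_lt_top hn hl).ne
  have hμ := fun r (hr : 0 ≤ r) => volume_setOf_rho_le hn hl hr
  refine ⟨integrableOn_rpow_comp_iff hρ (rho_nonneg l) hg
    (volume_setOf_rho_le_one_pos hn hl).ne' hc hμ one_pos s, fun hs t ht => ?_⟩
  rw [setIntegral_rpow_comp hρ (rho_nonneg l) hg hc hμ ht.le hs,
    setIntegral_rpow_comp hρ (rho_nonneg l) hg hc hμ zero_le_one hs, one_rpow, mul_one,
    mul_comm]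

end Semielliptic
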